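/- Let G be a finite simple graph and suppose x_i x_j is an edge of G. Then for every integer s with 1 ≤ s ≤ ht(I(G)) − 1, we have (I(G)^{s+1} : x_i x_j) = (I(G − x_j)^{s} : x_i) ∩ (I(G − x_i)^{s} : x_j), where G − x denotes the graph obtained from G by deleting the vertex x and all edges incident to it. -/

import Mathlib

open MvPolynomial

noncomputable section

/-! Generalities on graded pieces, Betti numbers and Castelnuovo–Mumford regularity
of homogeneous ideals in a polynomial ring, via the Koszul complex. -/

variable (K : Type) [Field K] (n : ℕ)

/-- The degree `d` graded piece of an ideal `I ⊆ K[x_1, …, x_n]`, as a `K`-subspace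
(`⊥` for negative `d`). -/
def degPiece (I : Ideal (MvPolynomial (Fin n) K)) (d : ℤ) :
    Submodule K (MvPolynomial (Fin n) K) :=
  if 0 ≤ d then (Submodule.restrictScalars K I) ⊓ homogeneousSubmodule (Fin n) K d.toNat
  else ⊥

theorem mulX_mem (I : Ideal (MvPolynomial (Fin n) K)) (k : Fin n) (d : ℤ)
    {x : MvPolynomial (Fin n) K} (hx : x ∈ degPiece K n I d) :
    (X k : MvPolynomial (Fin n) K) * x ∈ degPiece K n I (d + 1) := by
  by_cases h : 0 ≤ d
  · rw [degPiece, if_pos h, Submodule.mem_inf] at hx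
    rw [degPiece, if_pos (by omega : (0:ℤ) ≤ d + 1), Submodule.mem_inf]
    constructor
    · exact Ideal.mul_mem_left I _ hx.1
    · rw [mem_homogeneousSubmodule]
      have h2 := (isHomogeneous_X K k).mul ((mem_homogeneousSubmodule _ _).1 hx.2)
      have h3 : (d + 1).toNat = 1 + d.toNat := by omega
      rw [h3]
      exact h2
  · rw [degPiece, if_neg h, Submodule.mem_bot] at hx
    subst hx
    rw [mul_zero]
    exact Submodule.zero_mem _

/-- Multiplication by the variable `x_k`, as a map between graded pieces. -/
def mulXmap (I : Ideal (MvPolynomial (Fin n) K)) (k : Fin n) (d e : ℤ) (h : e = d + 1) :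
    degPiece K n I d →ₗ[K] degPiece K n I e :=
  LinearMap.restrict (LinearMap.mulLeft K (X k)) (by
    intro x hx
    subst h
    simpa using mulX_mem K n I k d hx)

/-- The differential, in internal degree `j`, of the complex obtained by tensoring the
ideal `I` with the Koszul complex on `x_1, …, x_n`; its homology computes
`Tor_i(I, K)_j`, whose dimension is the graded Betti number `β_{i,j}(I)`. -/
def koszulD (I : Ideal (MvPolynomial (Fin n) K)) (j i : ℕ) :
    ({T : Finset (Fin n) // T.card = i + 1} → degPiece K n I ((j : ℤ) - (i + 1)))
      →ₗ[K] ({T : Finset (Fin n) // T.card = i} → degPiece K n I ((j : ℤ) - i)) :=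
  LinearMap.pi fun T => ∑ k : Fin n,
    if h : k ∈ T.1 then 0
    else ((-1 : K) ^ (T.1.filter (fun l => l < k)).card) •
      ((mulXmap K n I k ((j : ℤ) - (i + 1)) ((j : ℤ) - i) (by ring)).comp
        (LinearMap.proj (⟨insert k T.1, by
          rw [Finset.card_insert_of_notMem h, T.2]⟩ : {T : Finset (Fin n) // T.card = i + 1})))

/-- The cycles of the (internal degree `j`) Koszul complex of `I` in homological degree `i`. -/
def kerChain (I : Ideal (MvPolynomial (Fin n) K)) (j : ℕ) :
    (i : ℕ) → Submodule K ({T : Finset (Fin n) // T.card = i} → degPiece K n I ((j : ℤ) - i))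
  | 0 => ⊤
  | (i + 1) => LinearMap.ker (koszulD K n I j i)

/-- The graded Betti number `β_{i,j}(I) = dim_K Tor_i(I, K)_j`. -/
def betti (I : Ideal (MvPolynomial (Fin n) K)) (i j : ℕ) : ℕ :=
  Module.finrank K (kerChain K n I j i) -
    Module.finrank K
      ((LinearMap.range (koszulD K n I j i) ⊓ kerChain K n I j i) : Submodule K _)

/-- The Castelnuovo–Mumford regularity `reg(I) = max { j - i | β_{i,j}(I) ≠ 0 }`. -/
def reg (I : Ideal (MvPolynomial (Fin n) K)) : ℤ :=
  sSup {r : ℤ | ∃ i j : ℕ, betti K n I i j ≠ 0 ∧ r = (j : ℤ) - i}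

/-- The squarefree part of a monomial ideal: the ideal generated by the squarefree
monomials belonging to it. -/
def sqfreePart (I : Ideal (MvPolynomial (Fin n) K)) : Ideal (MvPolynomial (Fin n) K) :=
  Ideal.span {m | m ∈ I ∧ ∃ A : Finset (Fin n), m = ∏ v ∈ A, X v}

/-- The `s`-th symbolic power of a (squarefree monomial) ideal:
the intersection of the `s`-th powers of its minimal primes; `S` for `s ≤ 0`. -/
def symbPow (I : Ideal (MvPolynomial (Fin n) K)) (s : ℤ) : Ideal (MvPolynomial (Fin n) K) :=
  if s ≤ 0 then ⊤ else ⨅ p ∈ I.minimalPrimes, p ^ s.toNat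

/-- `ssp I s` is `I^{s}`, the squarefree part of the `s`-th symbolic power of `I`. -/
def ssp (I : Ideal (MvPolynomial (Fin n) K)) (s : ℤ) : Ideal (MvPolynomial (Fin n) K) :=
  sqfreePart K n (symbPow K n I s)

/-- `sqPow I s` is `I^[s]`, the squarefree part of the ordinary power `I^s`. -/
def sqPow (I : Ideal (MvPolynomial (Fin n) K)) (s : ℕ) : Ideal (MvPolynomial (Fin n) K) :=
  sqfreePart K n (I ^ s)

/-- The height of an ideal: the minimum of the heights of its minimal primes. -/
def heightI (I : Ideal (MvPolynomial (Fin n) K)) : ℕ∞ :=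
  ⨅ p : I.minimalPrimes, Order.height (⟨p.1, p.2.1.1⟩ : PrimeSpectrum (MvPolynomial (Fin n) K))

/-- The colon ideal `(I : u)`. -/
def colonOf (I : Ideal (MvPolynomial (Fin n) K)) (u : MvPolynomial (Fin n) K) :
    Ideal (MvPolynomial (Fin n) K) :=
  Submodule.colon I (Ideal.span {u})

/-- `u` is a minimal monomial generator of the monomial ideal `I`:
`u` is a monomial belonging to `I` and `u/x_k ∉ I` for every variable `x_k` dividing `u`. -/
def IsMinGen (I : Ideal (MvPolynomial (Fin n) K)) (u : MvPolynomial (Fin n) K) : Prop :=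
  ∃ d : Fin n →₀ ℕ, u = monomial d (1 : K) ∧ u ∈ I ∧
    ∀ k : Fin n, d k ≠ 0 → monomial (d - Finsupp.single k 1) (1 : K) ∉ I

/-! Graph-theoretic notions. -/

/-- The graph obtained from `G` by deleting the vertices in `U` (and all edges meeting `U`),
on the same vertex set. -/
def delVerts (G : SimpleGraph (Fin n)) (U : Set (Fin n)) : SimpleGraph (Fin n) where
  Adj v w := G.Adj v w ∧ v ∉ U ∧ w ∉ U
  symm := ⟨fun _ _ h => ⟨h.1.symm, h.2.2, h.2.1⟩⟩
  loopless := ⟨fun v h => G.irrefl h.1⟩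


/-- The edge ideal `I(G)` of a graph `G` on the vertex set `{x_1, …, x_n}`. -/
def edgeIdeal (G : SimpleGraph (Fin n)) : Ideal (MvPolynomial (Fin n) K) :=
  Ideal.span {m | ∃ v w, G.Adj v w ∧ m = X v * X w}

/-- `a`, `b` enumerate the endpoints of a matching of `G` of size `k`:
the edges `a i b i` are pairwise disjoint edges of `G`. -/
def IsMatching (G : SimpleGraph (Fin n)) (k : ℕ) (a b : Fin k → Fin n) : Prop :=
  (∀ i, G.Adj (a i) (b i)) ∧
    ∀ i j, i ≠ j → a i ≠ a j ∧ b i ≠ b j ∧ a i ≠ b j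

/-- The matching number `match(G)`. -/
def matchNum (G : SimpleGraph (Fin n)) : ℕ :=
  sSup {k | ∃ a b : Fin k → Fin n, IsMatching n G k a b}

/-- An induced matching: a matching such that no edge of `G` other than the matching edges
joins two of its vertices. -/
def IsInducedMatching (G : SimpleGraph (Fin n)) (k : ℕ) (a b : Fin k → Fin n) : Prop :=
  IsMatching n G k a b ∧ ∀ i j, i ≠ j →
    ¬ G.Adj (a i) (a j) ∧ ¬ G.Adj (a i) (b j) ∧ ¬ G.Adj (b i) (a j) ∧ ¬ G.Adj (b i) (b j)

/-- The induced matching number `ind-match(G)`. -/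
def indMatchNum (G : SimpleGraph (Fin n)) : ℕ :=
  sSup {k | ∃ a b : Fin k → Fin n, IsInducedMatching n G k a b}

/-- An ordered matching `{a_i b_i}`: the `a_i` form an independent set and
`a_i b_j ∈ E(G)` implies `i ≤ j`. -/
def IsOrderedMatching (G : SimpleGraph (Fin n)) (k : ℕ) (a b : Fin k → Fin n) : Prop :=
  IsMatching n G k a b ∧ (∀ i j, ¬ G.Adj (a i) (a j)) ∧ ∀ i j, G.Adj (a i) (b j) → i ≤ j

/-- The ordered matching number `ord-match(G)`. -/
def ordMatchNum (G : SimpleGraph (Fin n)) : ℕ :=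
  sSup {k | ∃ a b : Fin k → Fin n, IsOrderedMatching n G k a b}

/-- A graph is chordal if it has no induced cycle of length at least four. -/
def IsChordal (G : SimpleGraph (Fin n)) : Prop :=
  ∀ k : ℕ, 4 ≤ k → ∀ f : ZMod k → Fin n, Function.Injective f →
    ¬ (∀ i j : ZMod k, G.Adj (f i) (f j) ↔ (j = i + 1 ∨ i = j + 1))


/-- The star triangle graph with `t` triangles: vertex `0` is the common vertex of all the
triangles, and for `0 ≤ i < t` the vertices `2i+1`, `2i+2` are the other two vertices of the
`i`-th triangle. -/
def starTriangle (t : ℕ) : SimpleGraph (Fin (2 * t + 1)) where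
  Adj u v := u ≠ v ∧ ((u : ℕ) = 0 ∨ (v : ℕ) = 0 ∨ ((u : ℕ) - 1) / 2 = ((v : ℕ) - 1) / 2)
  symm := by
    constructor
    intro u v h
    exact ⟨h.1.symm, by tauto⟩
  loopless := by constructor; intro u h; exact h.1 rfl

end

/-! The minimal primes of `I(G)` are the ideals `P_C = (x_v : v ∈ C)` of the vertex covers `C`
of `G`, so a squarefree monomial `x_A` lies in `I(G)^(s)` iff `|A ∩ C| ≥ s` for every cover `C`,
and a polynomial lies in `I(G)^{s}` iff the support of each of its monomials has this property.
The colon identity thereby becomes a statement about covers: every cover of `G` contains `x_i` or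
`x_j`, and removing that vertex leaves a cover of the graph with it deleted, while adding `x_j` to
a cover of `G - x_j` gives a cover of `G`. -/
namespace MvPolynomial

variable {σ R : Type*}

theorem prod_X_eq_monomial_sum_single [CommSemiring R] (A : Finset σ) :
    ∏ v ∈ A, (X v : MvPolynomial σ R) = monomial (∑ v ∈ A, Finsupp.single v 1) 1 :=
  (monomial_sum_one A _).symm

theorem sum_single_one_apply [DecidableEq σ] (A : Finset σ) (w : σ) :
    (∑ v ∈ A, Finsupp.single v 1 : σ →₀ ℕ) w = if w ∈ A then 1 else 0 := by
  simp only [Finsupp.finsetSum_apply, Finsupp.single_apply, Finset.sum_ite_eq']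

theorem sum_single_one_le_iff (A : Finset σ) (d : σ →₀ ℕ) :
    ∑ v ∈ A, Finsupp.single v 1 ≤ d ↔ A ⊆ d.support := by
  classical
  simp only [Finsupp.le_def, sum_single_one_apply, Finset.subset_iff, Finsupp.mem_support_iff]
  refine ⟨fun h v hv => ?_, fun h v => ?_⟩
  · have := h v
    rw [if_pos hv] at this
    omega
  · split_ifs with hv
    · exact Nat.one_le_iff_ne_zero.2 (h hv)
    · exact Nat.zero_le _

theorem isPrime_span_X_image [CommRing R] [IsDomain R] (C : Set σ) :
    (Ideal.span (X '' C : Set (MvPolynomial σ R))).IsPrime := by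
  classical
  set P := Ideal.span (X '' C : Set (MvPolynomial σ R))
  let φ : MvPolynomial σ R →ₐ[R] MvPolynomial σ R := aeval fun v => if v ∈ C then 0 else X v
  -- `φ` kills the variables of `C` and fixes the others, so it is the identity modulo `P`.
  have hφ : (Ideal.Quotient.mkₐ R P).comp φ = Ideal.Quotient.mkₐ R P := by
    refine algHom_ext fun v => ?_
    by_cases hv : v ∈ C
    · simpa [φ, hv, Eq.comm (a := (0 : _ ⧸ P)), Ideal.Quotient.eq_zero_iff_mem, P] using
        Ideal.subset_span (Set.mem_image_of_mem X hv)
    · simp [φ, hv]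
  have hker : P = RingHom.ker φ := by
    refine le_antisymm (Ideal.span_le.2 ?_) fun f hf => ?_
    · rintro _ ⟨v, hv, rfl⟩
      simp [φ, hv]
    · have := congr($hφ f)
      simp only [AlgHom.comp_apply, (RingHom.mem_ker.1 hf), map_zero] at this
      exact Ideal.Quotient.eq_zero_iff_mem.1 this.symm
  rw [hker]
  exact RingHom.ker_isPrime φ

theorem span_X_image_pow_eq_span_monomial [CommSemiring R] (C : Set σ) (s : ℕ) :
    Ideal.span (X '' C : Set (MvPolynomial σ R)) ^ s =
      Ideal.span ((monomial · 1) '' {e : σ →₀ ℕ | e.degree = s ∧ ↑e.support ⊆ C}) := by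
  rw [Ideal.span, Submodule.span_pow, Finsupp.image_pow_eq_finsuppProd_image]
  simp [Finsupp.prod, prod_X_pow_eq_monomial]

theorem prod_X_mem_span_X_image_pow_iff [CommSemiring R] [Nontrivial R] (A : Finset σ)
    (C : Set σ) (s : ℕ) :
    ∏ v ∈ A, (X v : MvPolynomial σ R) ∈ Ideal.span (X '' C) ^ s ↔ s ≤ (↑A ∩ C).ncard := by
  classical
  have hAC : (↑A ∩ C : Set σ) = ↑(A.filter (· ∈ C)) := by ext; simp
  constructor
  · rw [span_X_image_pow_eq_span_monomial, mem_ideal_span_monomial_image,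
      prod_X_eq_monomial_sum_single, support_monomial, if_neg one_ne_zero]
    intro h
    obtain ⟨e, ⟨rfl, hC⟩, hle⟩ := h _ (Finset.mem_singleton_self _)
    have he : ∀ v, e v ≤ if v ∈ A then 1 else 0 := fun v => by
      simpa only [sum_single_one_apply] using hle v
    have hsupp : e.support ⊆ A.filter (· ∈ C) := fun v hv => by
      have := he v
      refine Finset.mem_filter.2 ⟨?_, hC hv⟩
      by_contra hvA
      simp_all
    calc e.degree = ∑ v ∈ e.support, e v := Finsupp.degree_apply e
      _ ≤ ∑ v ∈ e.support, 1 := Finset.sum_le_sum fun v _ => (he v).trans (by split_ifs <;> simp)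
      _ = e.support.card := by simp
      _ ≤ (A.filter (· ∈ C)).card := Finset.card_le_card hsupp
      _ = (↑A ∩ C : Set σ).ncard := by rw [hAC, Set.ncard_coe_finset]
  · intro hs
    rw [hAC, Set.ncard_coe_finset] at hs
    rw [← Finset.prod_filter_mul_prod_filter_not A (· ∈ C)]
    refine Ideal.mul_mem_right _ _ (Ideal.pow_le_pow_right hs ?_)
    rw [← Finset.prod_const]
    exact Ideal.prod_mem_prod fun v hv => Ideal.subset_span ⟨v, (Finset.mem_filter.1 hv).2, rfl⟩

end MvPolynomial

theorem Finsupp.support_add_single_one {σ : Type*} [DecidableEq σ] (d : σ →₀ ℕ) (i : σ) :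
    (d + Finsupp.single i 1).support = insert i d.support := by
  rw [Finsupp.support_add_eq_union, Finsupp.support_single i one_ne_zero,
    Finset.union_comm, Finset.insert_eq]

section EdgeIdeal

variable {K : Type} [Field K] {n : ℕ}

theorem mem_sqfreePart_iff (J : Ideal (MvPolynomial (Fin n) K)) (p : MvPolynomial (Fin n) K) :
    p ∈ sqfreePart K n J ↔ ∀ d ∈ p.support, ∏ v ∈ d.support, X v ∈ J := by
  classical
  have hgen : {m | m ∈ J ∧ ∃ A : Finset (Fin n), m = ∏ v ∈ A, X v} =
      (monomial · 1) '' ((fun A => ∑ v ∈ A, Finsupp.single v 1) ''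
        {A : Finset (Fin n) | ∏ v ∈ A, X v ∈ J}) := by
    ext m
    simp only [Set.image_image, ← prod_X_eq_monomial_sum_single]
    constructor
    · rintro ⟨hm, A, rfl⟩
      exact ⟨A, hm, rfl⟩
    · rintro ⟨A, hA, rfl⟩
      exact ⟨hA, A, rfl⟩
  rw [sqfreePart, hgen, mem_ideal_span_monomial_image]
  refine forall₂_congr fun d _ => ⟨?_, fun h => ⟨_, ⟨d.support, h, rfl⟩, ?_⟩⟩
  · rintro ⟨_, ⟨A, hA, rfl⟩, hle⟩
    rw [← Finset.prod_sdiff ((sum_single_one_le_iff A d).1 hle)]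
    exact J.mul_mem_left _ hA
  · exact (sum_single_one_le_iff _ d).2 subset_rfl

theorem symbPow_natCast (I : Ideal (MvPolynomial (Fin n) K)) (s : ℕ) :
    symbPow K n I s = ⨅ p ∈ I.minimalPrimes, p ^ s := by
  rcases Nat.eq_zero_or_pos s with rfl | hs
  · simp [symbPow]
  · rw [symbPow, if_neg (by omega), Int.toNat_natCast]

theorem edgeIdeal_le_span_X_image {H : SimpleGraph (Fin n)} {C : Set (Fin n)}
    (hC : H.IsVertexCover C) : edgeIdeal K n H ≤ Ideal.span (X '' C) := by
  rw [edgeIdeal, Ideal.span_le]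
  rintro _ ⟨v, w, hvw, rfl⟩
  rcases hC hvw with h | h
  · exact Ideal.mul_mem_right _ _ (Ideal.subset_span ⟨v, h, rfl⟩)
  · exact Ideal.mul_mem_left _ _ (Ideal.subset_span ⟨w, h, rfl⟩)

theorem isVertexCover_setOf_X_mem {H : SimpleGraph (Fin n)} {q : Ideal (MvPolynomial (Fin n) K)}
    (hq : q.IsPrime) (hle : edgeIdeal K n H ≤ q) : H.IsVertexCover {v | X v ∈ q} :=
  fun v w hvw => hq.mem_or_mem (hle (Ideal.subset_span ⟨v, w, hvw, rfl⟩))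

theorem mem_symbPow_edgeIdeal_iff (H : SimpleGraph (Fin n)) (s : ℕ) (p : MvPolynomial (Fin n) K) :
    p ∈ symbPow K n (edgeIdeal K n H) s ↔
      ∀ C : Set (Fin n), H.IsVertexCover C → p ∈ Ideal.span (X '' C) ^ s := by
  simp only [symbPow_natCast, Ideal.mem_iInf]
  refine ⟨fun hp C hC => ?_, fun hp q hq => ?_⟩
  · have := isPrime_span_X_image (R := K) C
    obtain ⟨q, hq, hqC⟩ := Ideal.exists_minimalPrimes_le (edgeIdeal_le_span_X_image (K := K) hC)
    exact Ideal.pow_right_mono hqC s (hp q hq)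
  · refine Ideal.pow_right_mono ?_ s (hp _ (isVertexCover_setOf_X_mem hq.1.1 hq.1.2))
    rw [Ideal.span_le]
    rintro _ ⟨v, hv, rfl⟩
    exact hv

theorem mem_ssp_edgeIdeal_iff (H : SimpleGraph (Fin n)) (s : ℕ) (p : MvPolynomial (Fin n) K) :
    p ∈ ssp K n (edgeIdeal K n H) s ↔
      ∀ d ∈ p.support, ∀ C : Set (Fin n), H.IsVertexCover C → s ≤ (↑d.support ∩ C).ncard := by
  simp only [ssp, mem_sqfreePart_iff, mem_symbPow_edgeIdeal_iff, prod_X_mem_span_X_image_pow_iff]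

end EdgeIdeal

section VertexCover

variable {n : ℕ} {G : SimpleGraph (Fin n)} {x : Fin n} {C T : Set (Fin n)} {s : ℕ}

theorem SimpleGraph.IsVertexCover.insert_of_delVerts
    (hC : (delVerts n G {x}).IsVertexCover C) : G.IsVertexCover (insert x C) := by
  intro v w hvw
  by_cases hv : v = x
  · exact Or.inl (hv ▸ Set.mem_insert v C)
  by_cases hw : w = x
  · exact Or.inr (hw ▸ Set.mem_insert w C)
  exact (hC ⟨hvw, hv, hw⟩).imp (Set.mem_insert_of_mem x) (Set.mem_insert_of_mem x)

theorem SimpleGraph.IsVertexCover.diff_singleton_delVerts (hC : G.IsVertexCover C) :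
    (delVerts n G {x}).IsVertexCover (C \ {x}) :=
  fun _ _ hvw => (hC hvw.1).imp (fun h => ⟨h, hvw.2.1⟩) (fun h => ⟨h, hvw.2.2⟩)

theorem forall_isVertexCover_delVerts_of_forall
    (h : ∀ C, G.IsVertexCover C → s + 1 ≤ (insert x T ∩ C).ncard) :
    ∀ C, (delVerts n G {x}).IsVertexCover C → s ≤ (T ∩ C).ncard := fun C hC => by
  have := h _ hC.insert_of_delVerts
  rw [← Set.insert_inter_distrib] at this
  have := Set.ncard_insert_le x (T ∩ C)
  omega

theorem add_one_le_of_forall_isVertexCover_delVerts (hC : G.IsVertexCover C) (hx : x ∈ C)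
    (h : ∀ C, (delVerts n G {x}).IsVertexCover C → s ≤ (T ∩ C).ncard) :
    s + 1 ≤ (insert x T ∩ C).ncard := by
  have hsub : insert x (T ∩ (C \ {x})) ⊆ insert x T ∩ C := by
    rintro v (rfl | ⟨hvT, hvC, -⟩)
    exacts [⟨Set.mem_insert v T, hx⟩, ⟨Set.mem_insert_of_mem x hvT, hvC⟩]
  calc s + 1 ≤ (T ∩ (C \ {x})).ncard + 1 := by
        have := h _ hC.diff_singleton_delVerts
        omega
    _ = (insert x (T ∩ (C \ {x}))).ncard := (Set.ncard_insert_of_notMem (by simp)).symm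
    _ ≤ (insert x T ∩ C).ncard := Set.ncard_le_ncard hsub

theorem forall_isVertexCover_iff_delVerts {xi xj : Fin n} (hadj : G.Adj xi xj) :
    (∀ C, G.IsVertexCover C → s + 1 ≤ (insert xj (insert xi T) ∩ C).ncard) ↔
      (∀ C, (delVerts n G {xj}).IsVertexCover C → s ≤ (insert xi T ∩ C).ncard) ∧
        (∀ C, (delVerts n G {xi}).IsVertexCover C → s ≤ (insert xj T ∩ C).ncard) := by
  refine ⟨fun h => ⟨forall_isVertexCover_delVerts_of_forall h,
    forall_isVertexCover_delVerts_of_forall ?_⟩, fun ⟨hj, hi⟩ C hC => ?_⟩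
  · simpa only [Set.insert_comm xj xi] using h
  rcases hC hadj with hxi | hxj
  · rw [Set.insert_comm]
    exact add_one_le_of_forall_isVertexCover_delVerts hC hxi hi
  · exact add_one_le_of_forall_isVertexCover_delVerts hC hxj hj

end VertexCover

theorem ssp_colon_edge_eq_inf_general
    (K : Type) [Field K] (n : ℕ) (G : SimpleGraph (Fin n)) (xi xj : Fin n)
    (hadj : G.Adj xi xj) (s : ℕ) :
    colonOf K n (ssp K n (edgeIdeal K n G) ((s : ℤ) + 1))
        ((X xi : MvPolynomial (Fin n) K) * X xj) =
      colonOf K n (ssp K n (edgeIdeal K n (delVerts n G {xj})) (s : ℤ)) (X xi) ⊓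
        colonOf K n (ssp K n (edgeIdeal K n (delVerts n G {xi})) (s : ℤ)) (X xj) := by
  classical
  ext f
  rw [show (s : ℤ) + 1 = ((s + 1 : ℕ) : ℤ) by push_cast; rfl]
  simp only [colonOf, Ideal.mem_inf, Ideal.mem_colon_span_singleton, ← mul_assoc,
    mem_ssp_edgeIdeal_iff, support_mul_X, Finset.forall_mem_map, addRightEmbedding_apply,
    Finsupp.support_add_single_one, Finset.coe_insert, ← forall₂_and]
  exact forall₂_congr fun d _ => forall_isVertexCover_iff_delVerts hadj

/-- If `x_i x_j` is an edge of `G` and `1 ≤ s ≤ ht I(G) - 1`, then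
`(I(G)^{s+1} : x_i x_j) = (I(G - x_j)^{s} : x_i) ∩ (I(G - x_i)^{s} : x_j)`. -/
theorem ssp_colon_edge_eq_inf
    (K : Type) [Field K] (n : ℕ) (G : SimpleGraph (Fin n)) (xi xj : Fin n)
    (hadj : G.Adj xi xj) (s : ℕ) (hs1 : 1 ≤ s)
    (hs2 : (s : ℕ∞) + 1 ≤ heightI K n (edgeIdeal K n G)) :
    colonOf K n (ssp K n (edgeIdeal K n G) ((s : ℤ) + 1))
        ((X xi : MvPolynomial (Fin n) K) * X xj) =
      colonOf K n (ssp K n (edgeIdeal K n (delVerts n G {xj})) (s : ℤ)) (X xi) ⊓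
        colonOf K n (ssp K n (edgeIdeal K n (delVerts n G {xi})) (s : ℤ)) (X xj) :=
  ssp_colon_edge_eq_inf_general K n G xi xj hadj s
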